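/- A group Γ is amenable if and only if whenever Γ acts on a nonempty compact Hausdorff topological space K by homeomorphisms, there exists a Γ-invariant Borel probability measure on K (a Borel probability measure μ with μ(γ⁻¹A) = μ(A) for every γ ∈ Γ and every Borel set A ⊆ K). -/

import Mathlib

/-!
An invariant mean `m` on `Γ`, pushed forward along an orbit map `g ↦ g • x₀`, is a finitely
additive invariant set function on `K`. Its outer regularization by open sets is additive on
disjoint compact sets, because these have disjoint open neighbourhoods; so it is a content, and
the measure induced by this content is an invariant probability measure.

Conversely, the space of ultrafilters on `Γ` (its Stone–Čech compactification) is a compact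
Hausdorff `Γ`-space in which the clopen sets `{U | s ∈ U}` form a copy of the Boolean algebra of
subsets of `Γ`; an invariant probability measure restricted to them is an invariant mean.
-/

open MeasureTheory

/-- A group `Γ` is amenable if it admits a finitely additive, left-invariant probability
measure defined on all of its subsets. -/
def Amenable (Γ : Type*) [Group Γ] : Prop :=
  ∃ m : Set Γ → ℝ,
    (∀ A : Set Γ, 0 ≤ m A) ∧ (∀ A : Set Γ, m A ≤ 1) ∧
    m (Set.univ : Set Γ) = 1 ∧
    (∀ A B : Set Γ, Disjoint A B → m (A ∪ B) = m A + m B) ∧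
    (∀ (γ : Γ) (A : Set Γ), m ((γ * ·) '' A) = m A)

universe u

open Set TopologicalSpace
open scoped ENNReal

namespace Ultrafilter

variable {M α : Type*} [Monoid M] [MulAction M α]

instance : MulAction M (Ultrafilter α) where
  smul c U := U.map (c • ·)
  one_smul U := by
    change U.map _ = U
    simp only [one_smul, map_id']
  mul_smul c d U := by
    change U.map _ = (U.map _).map _
    rw [map_map]
    congr 1
    funext a
    exact mul_smul c d a

theorem mem_smul {c : M} {s : Set α} {U : Ultrafilter α} : s ∈ c • U ↔ (c • ·) ⁻¹' s ∈ U :=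
  mem_map

instance : ContinuousConstSMul M (Ultrafilter α) :=
  ⟨fun c => continuous_generateFrom_iff.2 <| by
    rintro _ ⟨s, rfl⟩
    exact ultrafilter_isOpen_basic ((c • ·) ⁻¹' s)⟩

end Ultrafilter

section FinitelyAdditive

variable {X Y : Type*}

def IsFinitelyAdditive (m : Set X → ℝ≥0∞) : Prop :=
  ∀ s t, Disjoint s t → m (s ∪ t) = m s + m t

namespace IsFinitelyAdditive

variable {m : Set X → ℝ≥0∞}

theorem monotone (hm : IsFinitelyAdditive m) : Monotone m := fun s t hst => by
  rw [← union_sdiff_cancel hst, hm _ _ disjoint_sdiff_right]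
  exact le_self_add

theorem union_le (hm : IsFinitelyAdditive m) (s t : Set X) : m (s ∪ t) ≤ m s + m t := by
  rw [← union_sdiff_self, hm _ _ disjoint_sdiff_right]
  gcongr
  exact hm.monotone sdiff_subset

theorem comp_preimage (hm : IsFinitelyAdditive m) (f : X → Y) :
    IsFinitelyAdditive fun s => m (f ⁻¹' s) := fun s t hst => by
  simp only [preimage_union, hm _ _ (hst.preimage f)]

end IsFinitelyAdditive

end FinitelyAdditive

section InfOpenSuperset

variable {X : Type*} [TopologicalSpace X] {m : Set X → ℝ≥0∞}

noncomputable def infOpenSuperset (m : Set X → ℝ≥0∞) (s : Set X) : ℝ≥0∞ :=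
  ⨅ U : {U : Set X // IsOpen U ∧ s ⊆ U}, m U

theorem infOpenSuperset_le {s U : Set X} (hU : IsOpen U) (hsU : s ⊆ U) :
    infOpenSuperset m s ≤ m U :=
  iInf_le (fun U : {U : Set X // IsOpen U ∧ s ⊆ U} => m U) ⟨U, hU, hsU⟩

theorem le_infOpenSuperset {s : Set X} {c : ℝ≥0∞} (h : ∀ U, IsOpen U → s ⊆ U → c ≤ m U) :
    c ≤ infOpenSuperset m s :=
  le_iInf fun U => h U U.2.1 U.2.2

theorem infOpenSuperset_mono : Monotone (infOpenSuperset m) := fun _ _ hst =>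
  le_infOpenSuperset fun _ hU htU => infOpenSuperset_le hU (hst.trans htU)

theorem infOpenSuperset_univ : infOpenSuperset m univ = m univ :=
  le_antisymm (infOpenSuperset_le isOpen_univ subset_rfl)
    (le_infOpenSuperset fun U _ hU => by rw [univ_subset_iff.1 hU])

theorem infOpenSuperset_ne_top (hm : m univ ≠ ∞) (s : Set X) : infOpenSuperset m s ≠ ∞ :=
  ne_top_of_le_ne_top hm <| (infOpenSuperset_mono (subset_univ s)).trans infOpenSuperset_univ.le

theorem infOpenSuperset_image_homeomorph (f : X ≃ₜ X) (hf : ∀ s, m (f ⁻¹' s) = m s)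
    (s : Set X) : infOpenSuperset m (f '' s) = infOpenSuperset m s := by
  refine le_antisymm (le_infOpenSuperset fun U hU hsU => ?_)
    (le_infOpenSuperset fun U hU hsU => ?_)
  · calc infOpenSuperset m (f '' s) ≤ m (f '' U) :=
          infOpenSuperset_le (f.isOpenMap U hU) (image_mono hsU)
      _ = m U := by rw [← hf, f.preimage_image]
  · calc infOpenSuperset m s ≤ m (f ⁻¹' U) :=
          infOpenSuperset_le (hU.preimage f.continuous) (image_subset_iff.1 hsU)
      _ = m U := hf U

theorem IsFinitelyAdditive.infOpenSuperset_union_le (hm : IsFinitelyAdditive m) (s t : Set X) :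
    infOpenSuperset m (s ∪ t) ≤ infOpenSuperset m s + infOpenSuperset m t :=
  ENNReal.le_iInf_add_iInf fun U V =>
    (infOpenSuperset_le (U.2.1.union V.2.1) (union_subset_union U.2.2 V.2.2)).trans
      (hm.union_le _ _)

theorem IsFinitelyAdditive.infOpenSuperset_union (hm : IsFinitelyAdditive m) {s t : Set X}
    (hst : SeparatedNhds s t) :
    infOpenSuperset m (s ∪ t) = infOpenSuperset m s + infOpenSuperset m t := by
  refine le_antisymm (hm.infOpenSuperset_union_le s t) (le_infOpenSuperset fun W hW hstW => ?_)
  obtain ⟨U, V, hU, hV, hsU, htV, hUV⟩ := hst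
  calc infOpenSuperset m s + infOpenSuperset m t ≤ m (W ∩ U) + m (W ∩ V) :=
        add_le_add
          (infOpenSuperset_le (hW.inter hU) (subset_inter (subset_union_left.trans hstW) hsU))
          (infOpenSuperset_le (hW.inter hV) (subset_inter (subset_union_right.trans hstW) htV))
    _ = m (W ∩ U ∪ W ∩ V) := (hm _ _ (hUV.mono inter_subset_right inter_subset_right)).symm
    _ ≤ m W := hm.monotone (union_subset inter_subset_left inter_subset_left)

end InfOpenSuperset

section Content

variable {X : Type*} [TopologicalSpace X] [R1Space X] {m : Set X → ℝ≥0∞}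

noncomputable def IsFinitelyAdditive.content (hm : IsFinitelyAdditive m) (hfin : m univ ≠ ∞) :
    Content X where
  toFun K := (infOpenSuperset m K).toNNReal
  mono' _ _ hKL := ENNReal.toNNReal_mono (infOpenSuperset_ne_top hfin _) (infOpenSuperset_mono hKL)
  sup_disjoint' K L hKL _ hL := by
    rw [Compacts.coe_sup, hm.infOpenSuperset_union
      (.of_isCompact_isCompact_isClosed K.isCompact L.isCompact hL hKL),
      ENNReal.toNNReal_add (infOpenSuperset_ne_top hfin _) (infOpenSuperset_ne_top hfin _)]
  sup_le' K L := by
    rw [Compacts.coe_sup,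
      ← ENNReal.toNNReal_add (infOpenSuperset_ne_top hfin _) (infOpenSuperset_ne_top hfin _)]
    exact ENNReal.toNNReal_mono
      (ENNReal.add_ne_top.2 ⟨infOpenSuperset_ne_top hfin _, infOpenSuperset_ne_top hfin _⟩)
      (hm.infOpenSuperset_union_le _ _)

namespace IsFinitelyAdditive

variable (hm : IsFinitelyAdditive m) (hfin : m univ ≠ ∞)

theorem content_apply (K : Compacts X) : hm.content hfin K = infOpenSuperset m K :=
  ENNReal.coe_toNNReal (infOpenSuperset_ne_top hfin _)

variable [MeasurableSpace X] [BorelSpace X]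

theorem content_measure_univ [CompactSpace X] : (hm.content hfin).measure univ = m univ := by
  rw [Content.measure_apply _ MeasurableSet.univ, Content.outerMeasure_of_isOpen _ _ isOpen_univ,
    Content.innerContent_of_isCompact _ isCompact_univ isOpen_univ, content_apply]
  exact infOpenSuperset_univ

theorem content_measure_preimage (f : X ≃ₜ X) (hf : ∀ s, m (f ⁻¹' s) = m s) {A : Set X}
    (hA : MeasurableSet A) : (hm.content hfin).measure (f ⁻¹' A) = (hm.content hfin).measure A := by
  rw [Content.measure_apply _ (f.continuous.measurable hA), Content.measure_apply _ hA]
  refine Content.outerMeasure_preimage _ f (fun K => ?_) A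
  rw [content_apply, content_apply, Compacts.coe_map, infOpenSuperset_image_homeomorph f hf]

end IsFinitelyAdditive

end Content

section InvariantMean

variable {Γ : Type*} [Group Γ]

structure IsInvariantMean (m : Set Γ → ℝ≥0∞) : Prop where
  isFinitelyAdditive : IsFinitelyAdditive m
  apply_univ : m univ = 1
  preimage_mul_left (γ : Γ) (s : Set Γ) : m ((γ * ·) ⁻¹' s) = m s

theorem amenable_iff_exists_isInvariantMean :
    Amenable Γ ↔ ∃ m : Set Γ → ℝ≥0∞, IsInvariantMean m := by
  constructor
  · rintro ⟨m, h0, -, huniv, hadd, hinv⟩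
    refine ⟨fun s => ENNReal.ofReal (m s), ⟨fun s t hst => ?_, ?_, fun γ s => ?_⟩⟩
    · simp only [hadd s t hst, ENNReal.ofReal_add (h0 s) (h0 t)]
    · simp only [huniv, ENNReal.ofReal_one]
    · simp only [← image_mul_left', hinv]
  · rintro ⟨m, hm, huniv, hinv⟩
    have hle : ∀ s, m s ≤ 1 := fun s => huniv ▸ hm.monotone (subset_univ s)
    have hfin : ∀ s, m s ≠ ∞ := fun s => ne_top_of_le_ne_top ENNReal.one_ne_top (hle s)
    refine ⟨fun s => (m s).toReal, fun s => ENNReal.toReal_nonneg, fun s => ?_, ?_,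
      fun s t hst => ?_, fun γ s => ?_⟩
    · simpa using ENNReal.toReal_mono ENNReal.one_ne_top (hle s)
    · simp only [huniv, ENNReal.toReal_one]
    · simp only [hm s t hst, ENNReal.toReal_add (hfin s) (hfin t)]
    · simp only [image_mul_left, hinv]

theorem IsInvariantMean.exists_invariant_probabilityMeasure {m : Set Γ → ℝ≥0∞}
    (hm : IsInvariantMean m) {K : Type*} [TopologicalSpace K] [MeasurableSpace K] [BorelSpace K]
    [CompactSpace K] [R1Space K] [MulAction Γ K] [ContinuousConstSMul Γ K] (x₀ : K) :
    ∃ μ : Measure K, IsProbabilityMeasure μ ∧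
      ∀ (γ : Γ) (A : Set K), MeasurableSet A → μ ((γ • ·) ⁻¹' A) = μ A := by
  set ν : Set K → ℝ≥0∞ := fun s => m ((· • x₀) ⁻¹' s)
  have hν : IsFinitelyAdditive ν := hm.isFinitelyAdditive.comp_preimage _
  have hν_univ : ν univ = 1 := hm.apply_univ
  have hν_inv (γ : Γ) (s : Set K) : ν ((γ • ·) ⁻¹' s) = ν s := by
    have : (· • x₀) ⁻¹' ((γ • ·) ⁻¹' s) = (γ * ·) ⁻¹' ((· • x₀) ⁻¹' s) := by
      ext g
      simp [mul_smul]
    simp only [ν, this, hm.preimage_mul_left]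
  have hfin : ν univ ≠ ∞ := hν_univ ▸ ENNReal.one_ne_top
  exact ⟨(hν.content hfin).measure, ⟨by rw [hν.content_measure_univ, hν_univ]⟩,
    fun γ A hA => hν.content_measure_preimage hfin (Homeomorph.smul γ) (hν_inv γ) hA⟩

theorem isInvariantMean_measure_setOf_mem [MeasurableSpace (Ultrafilter Γ)]
    [OpensMeasurableSpace (Ultrafilter Γ)] (μ : Measure (Ultrafilter Γ)) [IsProbabilityMeasure μ]
    (hμ : ∀ (γ : Γ) (A : Set (Ultrafilter Γ)), MeasurableSet A → μ ((γ • ·) ⁻¹' A) = μ A) :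
    IsInvariantMean fun s : Set Γ => μ {U | s ∈ U} where
  isFinitelyAdditive s t hst := by
    have hdisj : Disjoint {U : Ultrafilter Γ | s ∈ U} {U | t ∈ U} := disjoint_left.2
      fun U hs ht => U.empty_notMem (hst.inter_eq ▸ Filter.inter_mem hs ht)
    simp only [Ultrafilter.union_mem_iff, ofPred_or]
    exact measure_union hdisj (ultrafilter_isOpen_basic t).measurableSet
  apply_univ := (congrArg μ (eq_univ_of_forall fun _ => Filter.univ_mem)).trans measure_univ
  preimage_mul_left γ s := by
    have hpre : {U : Ultrafilter Γ | (γ * ·) ⁻¹' s ∈ U} = (γ • ·) ⁻¹' {U | s ∈ U} :=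
      ext fun U => (Ultrafilter.mem_smul (c := γ) (s := s) (U := U)).symm
    simp only [hpre]
    exact hμ γ _ (ultrafilter_isOpen_basic s).measurableSet

end InvariantMean

/-- A group is amenable if and only if every action of it by homeomorphisms on a nonempty
compact Hausdorff space admits an invariant Borel probability measure. -/
theorem amenable_iff_invariant_measure (Γ : Type u) [Group Γ] :
    Amenable Γ ↔
      ∀ (K : Type u) [TopologicalSpace K] [MeasurableSpace K] [BorelSpace K]
        [CompactSpace K] [T2Space K] [Nonempty K] [MulAction Γ K],
        (∀ γ : Γ, Continuous fun x : K => γ • x) →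
        ∃ μ : Measure K, IsProbabilityMeasure μ ∧
          ∀ (γ : Γ) (A : Set K), MeasurableSet A → μ ((fun x : K => γ • x) ⁻¹' A) = μ A := by
  rw [amenable_iff_exists_isInvariantMean]
  constructor
  · rintro ⟨m, hm⟩ K _ _ _ _ _ ⟨x₀⟩ _ hcont
    have : ContinuousConstSMul Γ K := ⟨hcont⟩
    exact hm.exists_invariant_probabilityMeasure x₀
  · intro H
    borelize (Ultrafilter Γ)
    obtain ⟨μ, _, hμ⟩ := H (Ultrafilter Γ) fun γ => continuous_const_smul γ
    exact ⟨_, isInvariantMean_measure_setOf_mem μ hμ⟩
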